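/- arXiv:2202.02975 — 4 statements merged into one kernel-verified Lean document; each statement's English description precedes it below -/
import Mathlib

section
/- Fix positive reals p_min ≤ p_max with θ = p_max/p_min, and C > 0. Suppose for each t ∈ {1,...,T} the function g_t : [0, δ_t] → ℝ is concave, differentiable, increasing with g_t(0) = 0 and derivative in [p_min, p_max]. Let OPT(t) denote the optimum of maximizing Σ_{τ≤t} g_τ(v_τ) subject to Σ_{τ≤t} v_τ ≤ C and 0 ≤ v_τ ≤ δ_τ. If π = ln θ + 1 and v̂_t satisfies g_t(v̂_t) = (1/π)(OPT(t) − OPT(t−1)) for each t (with OPT(0)=0), then Σ_{t=1}^T v̂_t ≤ C and Σ_{t=1}^T g_t(v̂_t) = (1/π)·OPT(T). -/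
/-!
Encode item `τ` by its supply curve `S τ p`, the length of `{x ∈ (0, δ τ] | p < g' τ x}`. By
concavity this set is an initial segment, so the layer-cake formula gives
`g τ v = ∫ p in 0..pmax, min v (S τ p)`, and water-filling gives
`OPT t = ∫ p in 0..pmax, min C (F t p)` with `F t = ∑ τ ≤ t, S τ`. The potential
`Φ t = ∫ p in 0..pmax, min C (F t p) / max p pmin` grows by at least `π * vhat t` at every step,
while `Φ T ≤ C * ∫ p in 0..pmax, (max p pmin)⁻¹ = (1 + log θ) * C = π * C`. Telescoping gives
`∑ vhat t ≤ C`; the value identity is the telescoped pursuit equation.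
-/

open MeasureTheory Set

noncomputable def superlevelLength (D : ℝ → ℝ) (δ p : ℝ) : ℝ :=
  volume.real ({x | p < D x} ∩ Ioc 0 δ)

lemma measureReal_inter_Ioc_eq_min {A : Set ℝ} {v : ℝ} (hv : 0 ≤ v) (hA : A ⊆ Ioi 0)
    (hfin : volume A ≠ ⊤) (hdown : ∀ x ∈ A, Ioc 0 x ⊆ A) :
    volume.real (A ∩ Ioc 0 v) = min v (volume.real A) := by
  by_cases hsub : Ioc 0 v ⊆ A
  · rw [inter_eq_right.2 hsub, Real.volume_real_Ioc_of_le hv, sub_zero, min_eq_left]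
    simpa [Real.volume_real_Ioc_of_le hv] using measureReal_mono hsub hfin
  · obtain ⟨x, hx, hxA⟩ := not_subset.1 hsub
    have hAx : A ⊆ Ioc 0 x := fun y hy =>
      ⟨hA hy, le_of_not_gt fun hxy => hxA (hdown y hy ⟨hx.1, hxy.le⟩)⟩
    rw [inter_eq_left.2 (hAx.trans (Ioc_subset_Ioc_right hx.2)), min_eq_right]
    calc volume.real A ≤ volume.real (Ioc 0 x) := measureReal_mono hAx measure_Ioc_lt_top.ne
      _ = x := by rw [Real.volume_real_Ioc_of_le hx.1.le, sub_zero]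
      _ ≤ v := hx.2

section SuperlevelLength

variable {D : ℝ → ℝ} {δ : ℝ}

lemma superlevelLength_antitone : Antitone (superlevelLength D δ) := fun _ _ hpq =>
  measureReal_mono (inter_subset_inter_left _ fun _ hx => hpq.trans_lt hx)
    (ne_top_of_le_ne_top measure_Ioc_lt_top.ne (measure_mono inter_subset_right))

lemma superlevelLength_of_forall_lt {p : ℝ} (hδ : 0 ≤ δ) (h : ∀ x ∈ Ioc 0 δ, p < D x) :
    superlevelLength D δ p = δ := by
  rw [superlevelLength, inter_eq_right.2 (show Ioc 0 δ ⊆ {x | p < D x} from h),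
    Real.volume_real_Ioc_of_le hδ, sub_zero]

lemma superlevelLength_of_forall_le {p : ℝ} (h : ∀ x ∈ Ioc 0 δ, D x ≤ p) :
    superlevelLength D δ p = 0 := by
  rw [superlevelLength, eq_empty_of_forall_notMem (s := {x | p < D x} ∩ Ioc 0 δ)
    fun x hx => (h x hx.2).not_gt hx.1, measureReal_empty]

lemma superlevelLength_eq_min (hD : AntitoneOn D (Icc 0 δ)) {v : ℝ} (hv : v ∈ Icc 0 δ) (p : ℝ) :
    superlevelLength D v p = min v (superlevelLength D δ p) := by
  rw [superlevelLength, ← inter_eq_right.2 (Ioc_subset_Ioc_right hv.2), ← inter_assoc]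
  refine measureReal_inter_Ioc_eq_min hv.1 (fun x hx => hx.2.1)
    (ne_top_of_le_ne_top measure_Ioc_lt_top.ne (measure_mono inter_subset_right)) ?_
  rintro x ⟨hpx, hx⟩ y hy
  exact ⟨hpx.trans_le (hD ⟨hy.1.le, hy.2.trans hx.2⟩ ⟨hx.1.le, hx.2⟩ hy.2),
    hy.1, hy.2.trans hx.2⟩

lemma integral_eq_integral_min_superlevelLength {P v : ℝ} (hD : AntitoneOn D (Icc 0 δ))
    (hD0 : ∀ x ∈ Icc 0 δ, 0 ≤ D x) (hDP : ∀ x ∈ Icc 0 δ, D x ≤ P) (hv : v ∈ Icc 0 δ) :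
    ∫ x in 0..v, D x = ∫ p in 0..P, min v (superlevelLength D δ p) := by
  have hδ : (0 : ℝ) ∈ Icc 0 δ := ⟨le_rfl, hv.1.trans hv.2⟩
  have hint : IntegrableOn D (Ioc 0 v) :=
    ((hD.mono (Icc_subset_Icc_right hv.2)).integrableOn_isCompact isCompact_Icc).mono_set
      Ioc_subset_Icc_self
  rw [intervalIntegral.integral_of_le hv.1, intervalIntegral.integral_of_le
    ((hD0 0 hδ).trans (hDP 0 hδ)), hint.integral_eq_integral_meas_lt
    (ae_restrict_of_forall_mem measurableSet_Ioc fun x hx => hD0 x ⟨hx.1.le, hx.2.trans hv.2⟩)]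
  have hlevel (p : ℝ) : (volume.restrict (Ioc 0 v)).real {x | p < D x} =
      min v (superlevelLength D δ p) := by
    rw [measureReal_restrict_apply' measurableSet_Ioc, ← superlevelLength_eq_min hD hv]
    rfl
  simp_rw [hlevel]
  refine setIntegral_eq_of_subset_of_forall_sdiff_eq_zero measurableSet_Ioi Ioc_subset_Ioi_self
    fun p hp => ?_
  rw [superlevelLength_of_forall_le fun x hx => (hDP x (Ioc_subset_Icc_self hx)).trans
    (le_of_not_ge fun h => hp.2 ⟨hp.1, h⟩), min_eq_right hv.1]

end SuperlevelLength

lemma ConcaveOn.antitoneOn_of_hasDerivWithinAt {f f' : ℝ → ℝ} {s : Set ℝ}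
    (hf : ConcaveOn ℝ s f) (hderiv : ∀ x ∈ s, HasDerivWithinAt f (f' x) s x) :
    AntitoneOn f' s := by
  intro x hx y hy hxy
  rcases hxy.eq_or_lt with rfl | hlt
  · rfl
  exact (hf.le_slope_of_hasDerivWithinAt hx hy hlt (hderiv y hy)).trans
    (hf.slope_le_of_hasDerivWithinAt hx hy hlt (hderiv x hx))

lemma eq_integral_of_hasDerivWithinAt_Icc {g D : ℝ → ℝ} {δ v : ℝ} (hg0 : g 0 = 0)
    (hderiv : ∀ x ∈ Icc 0 δ, HasDerivWithinAt g (D x) (Icc 0 δ) x)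
    (hD : IntervalIntegrable D volume 0 δ) (hv : v ∈ Icc 0 δ) :
    g v = ∫ x in 0..v, D x := by
  have hsub : Icc 0 v ⊆ Icc 0 δ := Icc_subset_Icc_right hv.2
  rw [intervalIntegral.integral_eq_sub_of_hasDerivAt_of_le hv.1
    (fun x hx => (hderiv x (hsub hx)).continuousWithinAt.mono hsub)
    (fun x hx => (hderiv x (hsub (Ioo_subset_Icc_self hx))).hasDerivAt
      (Icc_mem_nhds hx.1 (hx.2.trans_le hv.2)))
    (hD.mono_set (by rwa [uIcc_of_le hv.1, uIcc_of_le (hv.1.trans hv.2)])), hg0, sub_zero]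

/-- `S p` is the amount of resource on which the marginal value of `g` exceeds the price `p`;
the last field is the layer-cake formula recovering `g` from `S`. -/
structure IsSupplyCurve (S g : ℝ → ℝ) (δ pmin pmax : ℝ) : Prop where
  antitone : Antitone S
  eq_cap : ∀ p < pmin, S p = δ
  eq_zero : ∀ p, pmax ≤ p → S p = 0
  eq_integral : ∀ v ∈ Icc 0 δ, g v = ∫ p in 0..pmax, min v (S p)

namespace IsSupplyCurve

variable {S g : ℝ → ℝ} {δ pmin pmax : ℝ}

lemma nonneg (h : IsSupplyCurve S g δ pmin pmax) (p : ℝ) : 0 ≤ S p := by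
  rcases le_total p pmax with hp | hp
  · exact (h.eq_zero pmax le_rfl).ge.trans (h.antitone hp)
  · exact (h.eq_zero p hp).ge

lemma le_cap (h : IsSupplyCurve S g δ pmin pmax) (p : ℝ) : S p ≤ δ :=
  calc S p ≤ S (min p pmin - 1) := h.antitone (by linarith [min_le_left p pmin])
    _ = δ := h.eq_cap _ (by linarith [min_le_right p pmin])

lemma antitone_min (h : IsSupplyCurve S g δ pmin pmax) (v : ℝ) : Antitone fun p => min v (S p) :=
  fun _ _ hpq => min_le_min_left v (h.antitone hpq)

end IsSupplyCurve

lemma isSupplyCurve_superlevelLength {g g' : ℝ → ℝ} {δ pmin pmax : ℝ} (hpmin : 0 < pmin)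
    (hδ : 0 ≤ δ) (hconc : ConcaveOn ℝ (Icc 0 δ) g) (hg0 : g 0 = 0)
    (hderiv : ∀ v ∈ Icc 0 δ, HasDerivWithinAt g (g' v) (Icc 0 δ) v)
    (hgrad : ∀ v ∈ Icc 0 δ, g' v ∈ Icc pmin pmax) :
    IsSupplyCurve (superlevelLength g' δ) g δ pmin pmax where
  antitone := superlevelLength_antitone
  eq_cap _ hp := superlevelLength_of_forall_lt hδ fun x hx =>
    hp.trans_le (hgrad x (Ioc_subset_Icc_self hx)).1
  eq_zero _ hp := superlevelLength_of_forall_le fun x hx =>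
    (hgrad x (Ioc_subset_Icc_self hx)).2.trans hp
  eq_integral v hv := by
    have hanti := hconc.antitoneOn_of_hasDerivWithinAt hderiv
    rw [eq_integral_of_hasDerivWithinAt_Icc hg0 hderiv
      (AntitoneOn.intervalIntegrable (by rwa [uIcc_of_le hδ])) hv]
    exact integral_eq_integral_min_superlevelLength hanti
      (fun x hx => hpmin.le.trans (hgrad x hx).1) (fun x hx => (hgrad x hx).2) hv

lemma exists_close_pair_of_ge_of_le {f : ℝ → ℝ} {c a b ε : ℝ} (hab : a ≤ b) (ha : c ≤ f a)
    (hb : f b ≤ c) (hε : 0 < ε) :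
    ∃ q r, a ≤ q ∧ q ≤ r ∧ r ≤ b ∧ r ≤ q + ε ∧ c ≤ f q ∧ f r ≤ c := by
  set U := {x ∈ Icc a b | c ≤ f x}
  have hbdd : BddAbove U := ⟨b, fun x hx => hx.1.2⟩
  obtain ⟨q, hqU, hq⟩ :=
    exists_lt_of_lt_csSup (show U.Nonempty from ⟨a, ⟨le_rfl, hab⟩, ha⟩) (sub_lt_self _ hε)
  refine ⟨q, min b (q + ε), hqU.1.1, le_min hqU.1.2 (by linarith), min_le_left _ _,
    min_le_right _ _, hqU.2, ?_⟩
  rcases min_choice b (q + ε) with h | h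
  · rwa [h]
  · rw [h]
    by_contra! hlt
    have hmem : q + ε ∈ U := ⟨⟨by linarith [hqU.1.1], h ▸ min_le_left b (q + ε)⟩, hlt.le⟩
    linarith [le_csSup hbdd hmem]

lemma exists_sum_eq_of_sum_le_le {ι : Type*} {A : Finset ι} {a b : ι → ℝ} {c : ℝ}
    (hab : ∀ τ ∈ A, a τ ≤ b τ) (ha : ∑ τ ∈ A, a τ ≤ c) (hb : c ≤ ∑ τ ∈ A, b τ) :
    ∃ v : ι → ℝ, (∀ τ ∈ A, v τ ∈ Icc (a τ) (b τ)) ∧ ∑ τ ∈ A, v τ = c := by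
  obtain ⟨θ, hθ, hsum⟩ := intermediate_value_Icc zero_le_one
    (f := fun θ => ∑ τ ∈ A, (a τ + θ * (b τ - a τ))) (by fun_prop) (by simpa using ⟨ha, hb⟩)
  refine ⟨fun τ => a τ + θ * (b τ - a τ), fun τ hτ => ⟨?_, ?_⟩, hsum⟩
  · nlinarith [hab τ hτ, hθ.1]
  · nlinarith [hab τ hτ, hθ.2]

lemma integral_le_mul_of_nonpos_outside {h : ℝ → ℝ} {a b q r c : ℝ}
    (hi : IntervalIntegrable h volume a b) (haq : a ≤ q) (hqr : q ≤ r) (hrb : r ≤ b)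
    (hlow : ∀ x ∈ Icc a q, h x ≤ 0) (hmid : ∀ x ∈ Icc q r, h x ≤ c)
    (hhigh : ∀ x ∈ Icc r b, h x ≤ 0) :
    ∫ x in a..b, h x ≤ c * (r - q) := by
  have hq : q ∈ uIcc a b := mem_uIcc_of_le haq (hqr.trans hrb)
  have hr : r ∈ uIcc a b := mem_uIcc_of_le (haq.trans hqr) hrb
  have haq' := hi.mono_set (uIcc_subset_uIcc left_mem_uIcc hq)
  have hqb' := hi.mono_set (uIcc_subset_uIcc hq right_mem_uIcc)
  have hqr' := hi.mono_set (uIcc_subset_uIcc hq hr)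
  have hrb' := hi.mono_set (uIcc_subset_uIcc hr right_mem_uIcc)
  have h₁ := intervalIntegral.integral_mono_on haq haq' intervalIntegrable_const hlow
  have h₂ := intervalIntegral.integral_mono_on hqr hqr' intervalIntegrable_const hmid
  have h₃ := intervalIntegral.integral_mono_on hrb hrb' intervalIntegrable_const hhigh
  simp only [intervalIntegral.integral_zero, intervalIntegral.integral_const, smul_eq_mul]
    at h₁ h₂ h₃
  rw [← intervalIntegral.integral_add_adjacent_intervals haq' hqb',
    ← intervalIntegral.integral_add_adjacent_intervals hqr' hrb']
  linarith

def allocationValues {ι : Type*} (A : Finset ι) (C : ℝ) (δ : ι → ℝ) (g : ι → ℝ → ℝ) : Set ℝ :=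
  {y | ∃ v : ι → ℝ, (∀ τ ∈ A, v τ ∈ Icc 0 (δ τ)) ∧ (∑ τ ∈ A, v τ) ≤ C ∧
    y = ∑ τ ∈ A, g τ (v τ)}

section Allocation

variable {ι : Type*} {A : Finset ι} {S g : ι → ℝ → ℝ} {δ : ι → ℝ} {pmin pmax : ℝ}

lemma antitone_sum (hS : ∀ τ ∈ A, IsSupplyCurve (S τ) (g τ) (δ τ) pmin pmax) :
    Antitone fun p => ∑ τ ∈ A, S τ p := fun _ _ hpq =>
  Finset.sum_le_sum fun τ hτ => (hS τ hτ).antitone hpq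

lemma antitone_sum_min (hS : ∀ τ ∈ A, IsSupplyCurve (S τ) (g τ) (δ τ) pmin pmax) (v : ι → ℝ) :
    Antitone fun p => ∑ τ ∈ A, min (v τ) (S τ p) := fun _ _ hpq =>
  Finset.sum_le_sum fun τ hτ => (hS τ hτ).antitone_min _ hpq

lemma sum_eq_integral_sum_min (hS : ∀ τ ∈ A, IsSupplyCurve (S τ) (g τ) (δ τ) pmin pmax)
    {v : ι → ℝ} (hv : ∀ τ ∈ A, v τ ∈ Icc 0 (δ τ)) :
    ∑ τ ∈ A, g τ (v τ) = ∫ p in 0..pmax, ∑ τ ∈ A, min (v τ) (S τ p) := by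
  rw [intervalIntegral.integral_finsetSum fun τ hτ =>
    ((hS τ hτ).antitone_min _).intervalIntegrable]
  exact Finset.sum_congr rfl fun τ hτ => (hS τ hτ).eq_integral _ (hv τ hτ)

lemma sum_le_integral_min_sum (hS : ∀ τ ∈ A, IsSupplyCurve (S τ) (g τ) (δ τ) pmin pmax)
    (hpmax : 0 ≤ pmax) {C : ℝ} {v : ι → ℝ} (hv : ∀ τ ∈ A, v τ ∈ Icc 0 (δ τ))
    (hvC : ∑ τ ∈ A, v τ ≤ C) :
    ∑ τ ∈ A, g τ (v τ) ≤ ∫ p in 0..pmax, min C (∑ τ ∈ A, S τ p) := by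
  rw [sum_eq_integral_sum_min hS hv]
  refine intervalIntegral.integral_mono hpmax (antitone_sum_min hS v).intervalIntegrable
    (antitone_const.min (antitone_sum hS)).intervalIntegrable fun p => le_min ?_ ?_
  · exact (Finset.sum_le_sum fun τ _ => min_le_left _ _).trans hvC
  · exact Finset.sum_le_sum fun τ _ => min_le_right _ _

/-- Up to `ε`, `sum_le_integral_min_sum` is attained by spending `c` on the units of highest
marginal value: bracket the price at which the total supply drops below `c` within `[q, r]`, and
interpolate between the supplies at `r` and at `q`. -/
lemma exists_allocation_integral_min_sum_le
    (hS : ∀ τ ∈ A, IsSupplyCurve (S τ) (g τ) (δ τ) pmin pmax) (hpmin : 0 < pmin)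
    (hpmax : 0 ≤ pmax) {c ε : ℝ} (hc0 : 0 ≤ c) (hc : c ≤ ∑ τ ∈ A, δ τ) (hε : 0 < ε) :
    ∃ v : ι → ℝ, (∀ τ ∈ A, v τ ∈ Icc 0 (δ τ)) ∧ ∑ τ ∈ A, v τ = c ∧
      ∫ p in 0..pmax, min c (∑ τ ∈ A, S τ p) ≤ ∑ τ ∈ A, g τ (v τ) + ε := by
  set F := fun p => ∑ τ ∈ A, S τ p
  have hF0 : F 0 = ∑ τ ∈ A, δ τ := Finset.sum_congr rfl fun τ hτ => (hS τ hτ).eq_cap 0 hpmin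
  have hFP : F pmax = 0 := Finset.sum_eq_zero fun τ hτ => (hS τ hτ).eq_zero pmax le_rfl
  have hc1 : 0 < c + 1 := by linarith
  obtain ⟨q, r, hq0, hqr, hrP, hrq, hcq, hrc⟩ := exists_close_pair_of_ge_of_le (f := F) hpmax
    (hF0 ▸ hc) (hFP ▸ hc0) (div_pos hε hc1)
  obtain ⟨v, hv, hvc⟩ := exists_sum_eq_of_sum_le_le (fun τ hτ => (hS τ hτ).antitone hqr) hrc hcq
  have hvδ : ∀ τ ∈ A, v τ ∈ Icc 0 (δ τ) := fun τ hτ =>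
    ⟨((hS τ hτ).nonneg _).trans (hv τ hτ).1, (hv τ hτ).2.trans ((hS τ hτ).le_cap _)⟩
  refine ⟨v, hvδ, hvc, ?_⟩
  set G := fun p => ∑ τ ∈ A, min (v τ) (S τ p)
  have hlow : ∀ p ≤ q, G p = c := fun p hp => hvc ▸ Finset.sum_congr rfl fun τ hτ =>
    min_eq_left ((hv τ hτ).2.trans ((hS τ hτ).antitone hp))
  have hhigh : ∀ p, r ≤ p → G p = F p := fun p hp => Finset.sum_congr rfl fun τ hτ =>
    min_eq_right (((hS τ hτ).antitone hp).trans (hv τ hτ).1)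
  have hG0 : ∀ p, 0 ≤ G p := fun p =>
    Finset.sum_nonneg fun τ hτ => le_min (hvδ τ hτ).1 ((hS τ hτ).nonneg p)
  have hHi : IntervalIntegrable (fun p => min c (F p)) volume 0 pmax :=
    (antitone_const.min (antitone_sum hS)).intervalIntegrable
  have hGi : IntervalIntegrable G volume 0 pmax :=
    (antitone_sum_min hS v).intervalIntegrable
  have hloss : ∫ p in 0..pmax, (min c (F p) - G p) ≤ c * (r - q) :=
    integral_le_mul_of_nonpos_outside (hHi.sub hGi) hq0 hqr hrP
      (fun p hp => by linarith [hlow p hp.2, min_le_left c (F p)])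
      (fun p _ => by linarith [hG0 p, min_le_left c (F p)])
      (fun p hp => by linarith [hhigh p hp.1, min_le_right c (F p)])
  have hwidth : (r - q) * (c + 1) ≤ ε := (le_div_iff₀ hc1).1 (by linarith)
  rw [intervalIntegral.integral_sub hHi hGi] at hloss
  rw [sum_eq_integral_sum_min hS hvδ]
  nlinarith

lemma eq_integral_min_sum_of_isGreatest
    (hS : ∀ τ ∈ A, IsSupplyCurve (S τ) (g τ) (δ τ) pmin pmax) (hpmin : 0 < pmin)
    (hpmax : 0 ≤ pmax) {C O : ℝ} (hC : 0 ≤ C) (hO : IsGreatest (allocationValues A C δ g) O) :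
    O = ∫ p in 0..pmax, min C (∑ τ ∈ A, S τ p) := by
  obtain ⟨⟨v, hv, hvC, rfl⟩, hmax⟩ := hO
  refine le_antisymm (sum_le_integral_min_sum hS hpmax hv hvC)
    (le_of_forall_pos_le_add fun ε hε => ?_)
  have hδ : ∀ τ ∈ A, 0 ≤ δ τ := fun τ hτ => ((hS τ hτ).nonneg 0).trans ((hS τ hτ).le_cap 0)
  obtain ⟨w, hw, hwc, hle⟩ := exists_allocation_integral_min_sum_le hS hpmin hpmax
    (le_min hC (Finset.sum_nonneg hδ)) (min_le_right C _) hε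
  have hmin (p : ℝ) : min (min C (∑ τ ∈ A, δ τ)) (∑ τ ∈ A, S τ p) =
      min C (∑ τ ∈ A, S τ p) := by
    rw [min_assoc, min_eq_right (Finset.sum_le_sum fun τ hτ => (hS τ hτ).le_cap p)]
  simp only [hmin] at hle
  exact hle.trans (add_le_add_left (hmax ⟨w, hw, hwc.le.trans (min_le_left _ _), rfl⟩) ε)

end Allocation

lemma Antitone.exists_threshold {S : ℝ → ℝ} (hS : Antitone S) {a b w : ℝ} (hab : a ≤ b)
    (ha : ∀ p < a, w ≤ S p) :
    ∃ c ∈ Icc a b, (∀ p < c, w ≤ S p) ∧ ∀ p ∈ Ioc c b, S p < w := by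
  set U := insert a {p ∈ Icc a b | w ≤ S p}
  have hUb : ∀ x ∈ U, x ≤ b := by rintro x (rfl | hx); exacts [hab, hx.1.2]
  have hne : U.Nonempty := ⟨a, mem_insert _ _⟩
  have haU : a ≤ sSup U := le_csSup ⟨b, hUb⟩ (mem_insert _ _)
  refine ⟨sSup U, ⟨haU, csSup_le hne hUb⟩, fun p hp => ?_, fun p hp => ?_⟩
  · obtain ⟨x, hx, hpx⟩ := exists_lt_of_lt_csSup hne hp
    rcases hx with rfl | hx
    exacts [ha p hpx, hx.2.trans (hS hpx.le)]
  · by_contra! h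
    exact (le_csSup ⟨b, hUb⟩ (mem_insert_of_mem _ ⟨⟨haU.trans hp.1.le, hp.2⟩, h⟩)).not_gt hp.1

lemma IntervalIntegrable.div_max_const {f : ℝ → ℝ} {a b pmin : ℝ}
    (hf : IntervalIntegrable f volume a b) (hpmin : 0 < pmin) :
    IntervalIntegrable (fun p => f p / max p pmin) volume a b := by
  simp_rw [div_eq_mul_inv]
  exact hf.mul_continuousOn ((continuous_id.max continuous_const).continuousOn.inv₀ fun p _ =>
    (hpmin.trans_le (le_max_right p pmin)).ne')

/-- Let `w = (∫ p in 0..pmax, Δ p / max p pmin) / π` and let `c ≥ pmin` be the price at which `S`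
falls below `w`. On `[0, c]` the mass of `Δ` is at most `c * π * w ≤ π * ∫ min w S`, and on
`[c, pmax]` we have `Δ ≤ S = min w S`; hence `g v ≤ g w`, i.e. `v ≤ w`. -/
lemma mul_le_integral_div_max {S g Δ : ℝ → ℝ} {δ pmin pmax π v : ℝ}
    (hS : IsSupplyCurve S g δ pmin pmax) (hmono : StrictMonoOn g (Icc 0 δ)) (hpmin : 0 < pmin)
    (hp : pmin ≤ pmax) (hπ : 1 ≤ π) (hΔ : ∀ p, Δ p ∈ Icc 0 (S p))
    (hΔi : IntervalIntegrable Δ volume 0 pmax) (hv : v ∈ Icc 0 δ)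
    (hgv : π * g v = ∫ p in 0..pmax, Δ p) :
    π * v ≤ ∫ p in 0..pmax, Δ p / max p pmin := by
  set K := ∫ p in 0..pmax, Δ p / max p pmin
  have hπ0 : 0 < π := by linarith
  have hmax (p : ℝ) : 0 < max p pmin := hpmin.trans_le (le_max_right _ _)
  set w := K / π
  have hπw : π * w = K := mul_div_cancel₀ K hπ0.ne'
  rcases le_or_gt δ w with hδw | hwδ
  · exact hπw ▸ mul_le_mul_of_nonneg_left (hv.2.trans hδw) hπ0.le
  have hK : 0 ≤ K := intervalIntegral.integral_nonneg (hpmin.le.trans hp) fun p _ =>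
    div_nonneg (hΔ p).1 (hmax p).le
  have hw : w ∈ Icc 0 δ := ⟨div_nonneg hK hπ0.le, hwδ.le⟩
  obtain ⟨c, hc, hlt, hgt⟩ :=
    hS.antitone.exists_threshold hp fun p hp => hwδ.le.trans (hS.eq_cap p hp).ge
  have hc0 : 0 ≤ c := hpmin.le.trans hc.1
  have hΔc : IntervalIntegrable Δ volume 0 c :=
    hΔi.mono_set (uIcc_subset_uIcc left_mem_uIcc (mem_uIcc_of_le hc0 hc.2))
  have hΔc' : IntervalIntegrable Δ volume c pmax :=
    hΔi.mono_set (uIcc_subset_uIcc (mem_uIcc_of_le hc0 hc.2) right_mem_uIcc)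
  have hmi (a b : ℝ) : IntervalIntegrable (fun p => min w (S p)) volume a b :=
    (hS.antitone_min w).intervalIntegrable
  have h₁ : ∫ p in 0..c, Δ p ≤ c * K :=
    calc ∫ p in 0..c, Δ p ≤ ∫ p in 0..c, c * (Δ p / max p pmin) :=
          intervalIntegral.integral_mono_on hc0 hΔc ((hΔc.div_max_const hpmin).const_mul c)
            fun p hp => by
              rw [mul_div_assoc', le_div_iff₀ (hmax p), mul_comm (Δ p)]
              exact mul_le_mul_of_nonneg_right (max_le hp.2 hc.1) (hΔ p).1
      _ = c * ∫ p in 0..c, Δ p / max p pmin := intervalIntegral.integral_const_mul _ _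
      _ ≤ c * K := mul_le_mul_of_nonneg_left (intervalIntegral.integral_mono_interval le_rfl hc0
          hc.2 (ae_of_all _ fun p => div_nonneg (hΔ p).1 (hmax p).le)
          (hΔi.div_max_const hpmin)) hc0
  have h₂ : c * w ≤ ∫ p in 0..c, min w (S p) :=
    calc c * w = ∫ _ in 0..c, w := by simp
      _ ≤ _ := intervalIntegral.integral_mono_on_of_le_Ioo hc0 intervalIntegrable_const (hmi 0 c)
          fun p hp => le_min le_rfl (hlt p hp.2)
  have h₃ : ∫ p in c..pmax, Δ p ≤ ∫ p in c..pmax, min w (S p) :=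
    intervalIntegral.integral_mono_on_of_le_Ioo hc.2 hΔc' (hmi c pmax) fun p hp =>
      le_min ((hΔ p).2.trans (hgt p ⟨hp.1, hp.2.le⟩).le) (hΔ p).2
  have h₄ : 0 ≤ ∫ p in c..pmax, min w (S p) :=
    intervalIntegral.integral_nonneg hc.2 fun p _ => le_min hw.1 (hS.nonneg p)
  have hgw : π * g v ≤ π * g w := by
    rw [hgv, hS.eq_integral w hw, ← intervalIntegral.integral_add_adjacent_intervals hΔc hΔc',
      ← intervalIntegral.integral_add_adjacent_intervals (hmi 0 c) (hmi c pmax)]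
    nlinarith [mul_le_mul_of_nonneg_left h₂ hπ0.le, mul_le_mul_of_nonneg_right hπ h₄]
  rw [← hπw]
  exact mul_le_mul_of_nonneg_left
    ((hmono.le_iff_le hv hw).1 (le_of_mul_le_mul_left hgw hπ0)) hπ0.le

lemma sub_min_mem_Icc {c x y : ℝ} (hy : 0 ≤ y) : min c (x + y) - min c x ∈ Icc 0 y := by
  constructor <;> simp only [min_def] <;> split_ifs <;> linarith

lemma mul_le_potential_increment {S g F : ℝ → ℝ} {δ pmin pmax π v C : ℝ}
    (hS : IsSupplyCurve S g δ pmin pmax) (hmono : StrictMonoOn g (Icc 0 δ)) (hpmin : 0 < pmin)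
    (hp : pmin ≤ pmax) (hπ : 1 ≤ π) (hF : Antitone F) (hv : v ∈ Icc 0 δ)
    (hgv : π * g v = (∫ p in 0..pmax, min C (F p + S p)) - ∫ p in 0..pmax, min C (F p)) :
    π * v ≤ (∫ p in 0..pmax, min C (F p + S p) / max p pmin) -
      ∫ p in 0..pmax, min C (F p) / max p pmin := by
  have hnew : IntervalIntegrable (fun p => min C (F p + S p)) volume 0 pmax :=
    (antitone_const.min (hF.add hS.antitone)).intervalIntegrable
  have hold : IntervalIntegrable (fun p => min C (F p)) volume 0 pmax :=
    (antitone_const.min hF).intervalIntegrable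
  rw [← intervalIntegral.integral_sub hnew hold] at hgv
  rw [← intervalIntegral.integral_sub (hnew.div_max_const hpmin) (hold.div_max_const hpmin)]
  simp_rw [← sub_div]
  exact mul_le_integral_div_max hS hmono hpmin hp hπ (fun p => sub_min_mem_Icc (hS.nonneg p))
    (hnew.sub hold) hv hgv

lemma integral_inv_max {pmin pmax : ℝ} (hpmin : 0 < pmin) (hp : pmin ≤ pmax) :
    ∫ p in 0..pmax, (max p pmin)⁻¹ = 1 + Real.log (pmax / pmin) := by
  have hi (a b : ℝ) : IntervalIntegrable (fun p => (max p pmin)⁻¹) volume a b := by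
    simpa using (intervalIntegrable_const (c := (1 : ℝ))).div_max_const hpmin
  have hlow : ∫ p in 0..pmin, (max p pmin)⁻¹ = ∫ _ in 0..pmin, pmin⁻¹ :=
    intervalIntegral.integral_congr fun p hp' => by
      rw [uIcc_of_le hpmin.le] at hp'
      simp [max_eq_right hp'.2]
  have hhigh : ∫ p in pmin..pmax, (max p pmin)⁻¹ = ∫ p in pmin..pmax, p⁻¹ :=
    intervalIntegral.integral_congr fun p hp' => by
      rw [uIcc_of_le hp] at hp'
      simp [max_eq_left hp'.1]
  rw [← intervalIntegral.integral_add_adjacent_intervals (hi 0 pmin) (hi pmin pmax), hlow, hhigh,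
    integral_inv_of_pos hpmin (hpmin.trans_le hp)]
  simp [hpmin.ne']

lemma integral_min_div_max_le {F : ℝ → ℝ} (hF : Antitone F) {C pmin pmax : ℝ} (hpmin : 0 < pmin)
    (hp : pmin ≤ pmax) :
    ∫ p in 0..pmax, min C (F p) / max p pmin ≤ C * (1 + Real.log (pmax / pmin)) :=
  calc ∫ p in 0..pmax, min C (F p) / max p pmin ≤ ∫ p in 0..pmax, C / max p pmin :=
        intervalIntegral.integral_mono_on (hpmin.le.trans hp)
          ((antitone_const.min hF).intervalIntegrable.div_max_const hpmin)
          (intervalIntegrable_const.div_max_const hpmin) fun p _ =>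
            div_le_div_of_nonneg_right (min_le_left _ _) (hpmin.le.trans (le_max_right p pmin))
    _ = C * (1 + Real.log (pmax / pmin)) := by
      simp_rw [div_eq_mul_inv C]
      rw [intervalIntegral.integral_const_mul, integral_inv_max hpmin hp]

lemma sum_Icc_one_sub_pred (φ : ℕ → ℝ) (T : ℕ) :
    ∑ t ∈ Finset.Icc 1 T, (φ t - φ (t - 1)) = φ T - φ 0 := by
  induction T with
  | zero => simp
  | succ T ih =>
    rw [Finset.sum_Icc_succ_top (by omega), ih, Nat.add_sub_cancel]
    ring

lemma sum_Icc_one_eq_sum_pred_add {M : Type*} [AddCommMonoid M] (f : ℕ → M) {t : ℕ}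
    (ht : 1 ≤ t) : ∑ τ ∈ Finset.Icc 1 t, f τ = ∑ τ ∈ Finset.Icc 1 (t - 1), f τ + f t := by
  obtain ⟨s, rfl⟩ := Nat.exists_eq_add_of_le' ht
  rw [Finset.sum_Icc_succ_top (by omega), Nat.add_sub_cancel]

lemma sum_le_of_pursuit {T : ℕ} {S g : ℕ → ℝ → ℝ} {δ OPT vhat : ℕ → ℝ} {C pmin pmax π : ℝ}
    (hS : ∀ t ∈ Finset.Icc 1 T, IsSupplyCurve (S t) (g t) (δ t) pmin pmax)
    (hmono : ∀ t ∈ Finset.Icc 1 T, StrictMonoOn (g t) (Icc 0 (δ t))) (hC : 0 ≤ C)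
    (hpmin : 0 < pmin) (hp : pmin ≤ pmax) (hπ : π = Real.log (pmax / pmin) + 1)
    (hOPT : ∀ t ≤ T, OPT t = ∫ p in 0..pmax, min C (∑ τ ∈ Finset.Icc 1 t, S τ p))
    (hpursuit : ∀ t ∈ Finset.Icc 1 T, g t (vhat t) = (1 / π) * (OPT t - OPT (t - 1)))
    (hvhat : ∀ t ∈ Finset.Icc 1 T, vhat t ∈ Icc 0 (δ t)) :
    ∑ t ∈ Finset.Icc 1 T, vhat t ≤ C := by
  have hπ1 : 1 ≤ π := by rw [hπ]; linarith [Real.log_nonneg ((one_le_div hpmin).2 hp)]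
  have hF (t : ℕ) (ht : t ≤ T) : Antitone fun p => ∑ τ ∈ Finset.Icc 1 t, S τ p :=
    antitone_sum fun τ hτ => hS τ (Finset.Icc_subset_Icc_right ht hτ)
  set Φ : ℕ → ℝ := fun t => ∫ p in 0..pmax, min C (∑ τ ∈ Finset.Icc 1 t, S τ p) / max p pmin
  have hstep : ∀ t ∈ Finset.Icc 1 T, π * vhat t ≤ Φ t - Φ (t - 1) := by
    intro t ht
    obtain ⟨ht1, htT⟩ := Finset.mem_Icc.1 ht
    have hsplit (p : ℝ) : ∑ τ ∈ Finset.Icc 1 t, S τ p = ∑ τ ∈ Finset.Icc 1 (t - 1), S τ p + S t p :=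
      sum_Icc_one_eq_sum_pred_add (S · p) ht1
    simp only [Φ, hsplit]
    refine mul_le_potential_increment (hS t ht) (hmono t ht) hpmin hp hπ1 (hF (t - 1) (by omega))
      (hvhat t ht) ?_
    rw [hpursuit t ht, hOPT t htT, hOPT (t - 1) (by omega)]
    simp only [hsplit]
    field_simp
  have hΦT : Φ T ≤ π * C := by
    rw [hπ, mul_comm, add_comm]
    exact integral_min_div_max_le (hF T le_rfl) hpmin hp
  refine le_of_mul_le_mul_left ?_ (by linarith : 0 < π)
  calc π * ∑ t ∈ Finset.Icc 1 T, vhat t ≤ ∑ t ∈ Finset.Icc 1 T, (Φ t - Φ (t - 1)) := by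
        rw [Finset.mul_sum]
        exact Finset.sum_le_sum hstep
    _ = Φ T := by rw [sum_Icc_one_sub_pred]; simp [Φ, hC]
    _ ≤ π * C := hΦT

theorem stmt_5_general (T : ℕ) (C pmin pmax θ π : ℝ)
    (g : ℕ → ℝ → ℝ) (g' : ℕ → ℝ → ℝ) (δ : ℕ → ℝ)
    (OPT : ℕ → ℝ) (vhat : ℕ → ℝ)
    (hC : 0 < C) (hpmin : 0 < pmin) (hp : pmin ≤ pmax)
    (hθ : θ = pmax / pmin)
    (hconc : ∀ t ∈ Finset.Icc 1 T, ConcaveOn ℝ (Set.Icc 0 (δ t)) (g t))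
    (hmono : ∀ t ∈ Finset.Icc 1 T, StrictMonoOn (g t) (Set.Icc 0 (δ t)))
    (hg0 : ∀ t ∈ Finset.Icc 1 T, g t 0 = 0)
    (hderiv : ∀ t ∈ Finset.Icc 1 T, ∀ v ∈ Set.Icc 0 (δ t),
      HasDerivWithinAt (g t) (g' t v) (Set.Icc 0 (δ t)) v)
    (hgrad : ∀ t ∈ Finset.Icc 1 T, ∀ v ∈ Set.Icc 0 (δ t), g' t v ∈ Set.Icc pmin pmax)
    (hOPT0 : OPT 0 = 0)
    (hOPT : ∀ t ∈ Finset.Icc 1 T,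
      IsGreatest {y : ℝ | ∃ v : ℕ → ℝ,
        (∀ τ ∈ Finset.Icc 1 t, v τ ∈ Set.Icc 0 (δ τ)) ∧
        (∑ τ ∈ Finset.Icc 1 t, v τ) ≤ C ∧
        y = ∑ τ ∈ Finset.Icc 1 t, g τ (v τ)} (OPT t))
    (hπ : π = Real.log θ + 1)
    (hpursuit : ∀ t ∈ Finset.Icc 1 T,
      g t (vhat t) = (1 / π) * (OPT t - OPT (t - 1)))
    (hvhat : ∀ t ∈ Finset.Icc 1 T, vhat t ∈ Set.Icc 0 (δ t)) :
    (∑ t ∈ Finset.Icc 1 T, vhat t) ≤ C ∧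
    (∑ t ∈ Finset.Icc 1 T, g t (vhat t)) = (1 / π) * OPT T := by
  set S : ℕ → ℝ → ℝ := fun t => superlevelLength (g' t) (δ t)
  have hS : ∀ t ∈ Finset.Icc 1 T, IsSupplyCurve (S t) (g t) (δ t) pmin pmax := fun t ht =>
    isSupplyCurve_superlevelLength hpmin ((hvhat t ht).1.trans (hvhat t ht).2) (hconc t ht)
      (hg0 t ht) (hderiv t ht) (hgrad t ht)
  have hOPTF : ∀ t ≤ T, OPT t = ∫ p in 0..pmax, min C (∑ τ ∈ Finset.Icc 1 t, S τ p) := by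
    rintro (_ | t) ht
    · simp [hOPT0, hC.le]
    · exact eq_integral_min_sum_of_isGreatest
        (fun τ hτ => hS τ (Finset.Icc_subset_Icc_right ht hτ)) hpmin (hpmin.le.trans hp) hC.le
        (hOPT _ (Finset.mem_Icc.2 ⟨by omega, ht⟩))
  refine ⟨sum_le_of_pursuit hS hmono hC.le hpmin hp (hθ ▸ hπ) hOPTF hpursuit hvhat, ?_⟩
  rw [Finset.sum_congr rfl hpursuit, ← Finset.mul_sum, sum_Icc_one_sub_pred, hOPT0, sub_zero]

theorem stmt_5 (T : ℕ) (C pmin pmax θ π : ℝ)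
    (g : ℕ → ℝ → ℝ) (g' : ℕ → ℝ → ℝ) (δ : ℕ → ℝ)
    (OPT : ℕ → ℝ) (vhat : ℕ → ℝ)
    (hC : 0 < C) (hpmin : 0 < pmin) (hp : pmin ≤ pmax)
    (hθ : θ = pmax / pmin)
    (hδ : ∀ t ∈ Finset.Icc 1 T, 0 ≤ δ t)
    (hconc : ∀ t ∈ Finset.Icc 1 T, ConcaveOn ℝ (Set.Icc 0 (δ t)) (g t))
    (hmono : ∀ t ∈ Finset.Icc 1 T, StrictMonoOn (g t) (Set.Icc 0 (δ t)))
    (hg0 : ∀ t ∈ Finset.Icc 1 T, g t 0 = 0)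
    (hderiv : ∀ t ∈ Finset.Icc 1 T, ∀ v ∈ Set.Icc 0 (δ t),
      HasDerivWithinAt (g t) (g' t v) (Set.Icc 0 (δ t)) v)
    (hgrad : ∀ t ∈ Finset.Icc 1 T, ∀ v ∈ Set.Icc 0 (δ t), g' t v ∈ Set.Icc pmin pmax)
    (hOPT0 : OPT 0 = 0)
    (hOPT : ∀ t ∈ Finset.Icc 1 T,
      IsGreatest {y : ℝ | ∃ v : ℕ → ℝ,
        (∀ τ ∈ Finset.Icc 1 t, v τ ∈ Set.Icc 0 (δ τ)) ∧
        (∑ τ ∈ Finset.Icc 1 t, v τ) ≤ C ∧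
        y = ∑ τ ∈ Finset.Icc 1 t, g τ (v τ)} (OPT t))
    (hπ : π = Real.log θ + 1)
    (hpursuit : ∀ t ∈ Finset.Icc 1 T,
      g t (vhat t) = (1 / π) * (OPT t - OPT (t - 1)))
    (hvhat : ∀ t ∈ Finset.Icc 1 T, vhat t ∈ Set.Icc 0 (δ t)) :
    (∑ t ∈ Finset.Icc 1 T, vhat t) ≤ C ∧
    (∑ t ∈ Finset.Icc 1 T, g t (vhat t)) = (1 / π) * OPT T :=
  stmt_5_general T C pmin pmax θ π g g' δ OPT vhat hC hpmin hp hθ hconc hmono hg0 hderiv hgrad hOPT0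
    hOPT hπ hpursuit hvhat
end

section
/- Let g : [0, δ] → ℝ be concave with g(0) = 0, and let 0 = v⁰ ≤ v¹ ≤ ... ≤ v^k = δ. Suppose nonnegative reals w¹, ..., w^k satisfy Σ_{j<i} wʲ ≤ v^{i−1} and wⁱ ≤ vⁱ − v^{i−1} for each i. Then Σ_{i=1}^k [g(v^{i−1} + wⁱ) − g(v^{i−1})] ≤ g(Σ_{i=1}^k wⁱ). -/
/-!
Concavity makes increments shrink as the base point moves right: `g (b + t) - g b ≤ g (a + t) - g a`
whenever `a ≤ b`. The constraint `∑_{j<i} wʲ ≤ v^{i-1}` says that the `i`-th increment, taken at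
`v^{i-1}`, sits to the right of the same increment taken at the partial sum `∑_{j<i} wʲ`, and the
latter increments telescope to `g (∑ wⁱ) - g 0`.
-/

open Finset

section Increments

variable {𝕜 : Type*} [Field 𝕜] [LinearOrder 𝕜] [IsStrictOrderedRing 𝕜] {s : Set 𝕜} {g : 𝕜 → 𝕜}

theorem ConcaveOn.add_sub_le_add_sub_of_le (hg : ConcaveOn 𝕜 s g) {a b t : 𝕜} (ha : a ∈ s)
    (hbt : b + t ∈ s) (hab : a ≤ b) (ht : 0 ≤ t) : g (b + t) - g b ≤ g (a + t) - g a := by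
  rcases (add_nonneg (sub_nonneg.2 hab) ht).eq_or_lt with hd | hd
  · obtain ⟨rfl, rfl⟩ : b = a ∧ t = 0 := ⟨by linarith, by linarith⟩
    simp
  -- `b` and `a + t` are the convex combinations of `a` and `b + t` with swapped weights.
  set μ := (b - a) / (b - a + t) with hμ
  have hμ0 : 0 ≤ μ := div_nonneg (sub_nonneg.2 hab) hd.le
  have hμ1 : μ ≤ 1 := div_le_one_of_le₀ (by linarith) hd.le
  have hb : (1 - μ) • a + μ • (b + t) = b := by
    simp only [smul_eq_mul, hμ]; field_simp; ring
  have hat : μ • a + (1 - μ) • (b + t) = a + t := by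
    simp only [smul_eq_mul, hμ]; field_simp; ring
  have h₁ := hg.2 ha hbt (sub_nonneg.2 hμ1) hμ0 (sub_add_cancel 1 μ)
  have h₂ := hg.2 ha hbt hμ0 (sub_nonneg.2 hμ1) (add_sub_cancel μ 1)
  rw [hb] at h₁
  rw [hat] at h₂
  simp only [smul_eq_mul] at h₁ h₂
  linarith

theorem ConcaveOn.sum_increments_le_sub (hg : ConcaveOn 𝕜 s g) (x w : ℕ → 𝕜) (n : ℕ)
    (hw : ∀ i ∈ Icc 1 n, 0 ≤ w i)
    (hsum : ∀ i ∈ Icc 1 n, ∑ j ∈ Icc 1 (i - 1), w j ≤ x (i - 1))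
    (hsum_mem : ∀ i ∈ Icc 1 n, ∑ j ∈ Icc 1 (i - 1), w j ∈ s)
    (hmem : ∀ i ∈ Icc 1 n, x (i - 1) + w i ∈ s) :
    ∑ i ∈ Icc 1 n, (g (x (i - 1) + w i) - g (x (i - 1))) ≤ g (∑ i ∈ Icc 1 n, w i) - g 0 := by
  induction n with
  | zero => simp
  | succ n ih =>
    have hsub : Icc 1 n ⊆ Icc 1 (n + 1) := Icc_subset_Icc_right n.le_succ
    have hlast : n + 1 ∈ Icc 1 (n + 1) := right_mem_Icc.2 n.succ_pos
    have hstep := hg.add_sub_le_add_sub_of_le (hsum_mem _ hlast) (hmem _ hlast) (hsum _ hlast)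
      (hw _ hlast)
    have hprev := ih (fun i hi ↦ hw i (hsub hi)) (fun i hi ↦ hsum i (hsub hi))
      (fun i hi ↦ hsum_mem i (hsub hi)) (fun i hi ↦ hmem i (hsub hi))
    simp only [Nat.add_sub_cancel] at hstep
    rw [sum_Icc_succ_top n.succ_pos, sum_Icc_succ_top n.succ_pos, Nat.add_sub_cancel]
    linarith

end Increments

theorem stmt_7_general (g : ℝ → ℝ) (δ : ℝ) (k : ℕ) (v w : ℕ → ℝ)
    (hconc : ConcaveOn ℝ (Set.Icc 0 δ) g)
    (hg0 : g 0 = 0)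
    (hvk : v k = δ)
    (hvmono : ∀ i ∈ Finset.Icc 1 k, v (i - 1) ≤ v i)
    (hw : ∀ i ∈ Finset.Icc 1 k, 0 ≤ w i)
    (hwsum : ∀ i ∈ Finset.Icc 1 k, (∑ j ∈ Finset.Icc 1 (i - 1), w j) ≤ v (i - 1))
    (hwrate : ∀ i ∈ Finset.Icc 1 k, w i ≤ v i - v (i - 1)) :
    (∑ i ∈ Finset.Icc 1 k, (g (v (i - 1) + w i) - g (v (i - 1)))) ≤
      g (∑ i ∈ Finset.Icc 1 k, w i) := by
  have hv_le : ∀ i ≤ k, v i ≤ δ := by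
    have hmono : MonotoneOn v (Set.Iic k) := monotoneOn_of_le_succ Set.ordConnected_Iic
      fun i _ _ hi ↦ by
        simpa [Order.succ_eq_add_one] using hvmono (i + 1) (mem_Icc.2 ⟨by omega, hi⟩)
    exact fun i hi ↦ hvk ▸ hmono hi Set.self_mem_Iic hi
  have hpartial_nonneg : ∀ i ∈ Icc 1 k, 0 ≤ ∑ j ∈ Icc 1 (i - 1), w j := fun i hi ↦
    sum_nonneg fun j hj ↦ hw j (mem_Icc.2 ⟨(mem_Icc.1 hj).1, by grind⟩)
  have key := hconc.sum_increments_le_sub v w k hw hwsum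
    (fun i hi ↦ ⟨hpartial_nonneg i hi, (hwsum i hi).trans (hv_le _ (by grind))⟩)
    (fun i hi ↦ ⟨by linarith [hpartial_nonneg i hi, hwsum i hi, hw i hi],
      by linarith [hwrate i hi, hv_le i (mem_Icc.1 hi).2]⟩)
  rwa [hg0, sub_zero] at key

theorem stmt_7 (g : ℝ → ℝ) (δ : ℝ) (k : ℕ) (v w : ℕ → ℝ)
    (hδ : 0 ≤ δ)
    (hconc : ConcaveOn ℝ (Set.Icc 0 δ) g)
    (hg0 : g 0 = 0)
    (hv0 : v 0 = 0) (hvk : v k = δ)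
    (hvmono : ∀ i ∈ Finset.Icc 1 k, v (i - 1) ≤ v i)
    (hw : ∀ i ∈ Finset.Icc 1 k, 0 ≤ w i)
    (hwsum : ∀ i ∈ Finset.Icc 1 k, (∑ j ∈ Finset.Icc 1 (i - 1), w j) ≤ v (i - 1))
    (hwrate : ∀ i ∈ Finset.Icc 1 k, w i ≤ v i - v (i - 1)) :
    (∑ i ∈ Finset.Icc 1 k, (g (v (i - 1) + w i) - g (v (i - 1)))) ≤
      g (∑ i ∈ Finset.Icc 1 k, w i) :=
  stmt_7_general g δ k v w hconc hg0 hvk hvmono hw hwsum hwrate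
end

section
/- Let g : [0, ∞) → ℝ be concave, increasing, differentiable with g(0) = 0, let π ≥ 1, set g̃(v) = π·g(v/π), and let G(x, a) be a parametric optimum function (concave in (x,a)) whose partial derivatives satisfy ∂G/∂x = η* and ∂G/∂a = φ*_t, where η*, φ*_t, ψ*_t ≥ 0 are optimal dual multipliers satisfying g̃'(v*) = η* + φ*_t − ψ*_t at the optimal current-slot allocation v* ≤ a. Then g̃'(a) ≤ ∂G(x,a)/∂x + ∂G(x,a)/∂a. -/
theorem stmt_14 (g : ℝ → ℝ) (π : ℝ) (hπ : 1 ≤ π)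
    (hconc : ConcaveOn ℝ (Set.Ici 0) g)
    (hmono : StrictMonoOn g (Set.Ici 0))
    (hdiff : DifferentiableOn ℝ g (Set.Ici 0))
    (hg0 : g 0 = 0)
    (gtd : ℝ → ℝ)
    (hgtd : ∀ v : ℝ, 0 ≤ v →
      HasDerivWithinAt (fun v => π * g (v / π)) (gtd v) (Set.Ici 0) v)
    (a vstar η φt ψt Gx Ga : ℝ)
    (ha : 0 ≤ a) (hvstar : vstar ∈ Set.Icc 0 a)
    (hη : 0 ≤ η) (hφt : 0 ≤ φt) (hψt : 0 ≤ ψt)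
    (hKKT : gtd vstar = η + φt - ψt)
    (hGx : Gx = η) (hGa : Ga = φt) :
    gtd a ≤ Gx + Ga := by
  have hπ0 : (0:ℝ) < π := lt_of_lt_of_le one_pos hπ
  set f : ℝ → ℝ := fun v => π * g (v / π) with hf
  have hconcf : ConcaveOn ℝ (Set.Ici 0) f := by
    constructor
    · exact convex_Ici 0
    · intro x hx y hy b c hb hc hbc
      have hx' : x / π ∈ Set.Ici (0:ℝ) := div_nonneg hx hπ0.le
      have hy' : y / π ∈ Set.Ici (0:ℝ) := div_nonneg hy hπ0.le
      have := hconc.2 hx' hy' hb hc hbc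
      simp only [smul_eq_mul] at this ⊢
      have heq : (b * x + c * y) / π = b * (x / π) + c * (y / π) := by ring
      simp only [hf, heq]
      nlinarith [this]
  have hconv : ConvexOn ℝ (Set.Ici 0) (fun v => -f v) := hconcf.neg
  have hdf : DifferentiableOn ℝ (fun v => -f v) (Set.Ici 0) := by
    intro x hx
    exact ((hgtd x hx).differentiableWithinAt).neg
  have hmonoD := hconv.monotoneOn_derivWithin hdf
  have hud : UniqueDiffOn ℝ (Set.Ici (0:ℝ)) := uniqueDiffOn_Ici 0
  have hder : ∀ x, 0 ≤ x → derivWithin (fun v => -f v) (Set.Ici 0) x = -gtd x := by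
    intro x hx
    exact ((hgtd x hx).neg).derivWithin (hud x hx)
  have hvs0 : 0 ≤ vstar := hvstar.1
  have hkey := hmonoD hvs0 (Set.mem_Ici.mpr ha) hvstar.2
  rw [hder vstar hvs0, hder a ha] at hkey
  have : gtd a ≤ gtd vstar := by linarith
  rw [hKKT] at this
  linarith
end

section
/- Suppose for a single-inventory problem with revenue-function class G~ the maximum total allocation of CR-Pursuit(1) satisfies Φ_{G~}(1) ≤ π~·C for some π~ ≥ 1, where all revenue functions in G~ are concave, increasing, differentiable with value 0 at 0. Then for any π ≥ π~, the maximum total allocation of CR-Pursuit(π) satisfies Φ_{G~}(π) ≤ (1/π)·Φ_{G~}(1) ≤ C, so CR-Pursuit(π~) is feasible and π~-competitive for the single-inventory problem. -/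
lemma telescope_icc (T : ℕ) (f : ℕ → ℝ) :
    ∑ t ∈ Finset.Icc 1 T, (f t - f (t - 1)) = f T - f 0 := by
  induction T with
  | zero => simp
  | succ n ih =>
    rw [Finset.sum_Icc_succ_top (Nat.one_le_iff_ne_zero.mpr (Nat.succ_ne_zero n)), ih]
    simp

theorem stmt_18 (T : ℕ) (C πt π : ℝ)
    (g : ℕ → ℝ → ℝ) (δ : ℕ → ℝ) (OPT : ℕ → ℝ) (v1 vπ : ℕ → ℝ)
    (hC : 0 < C) (hπt : 1 ≤ πt) (hπ : πt ≤ π)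
    (hδ : ∀ t ∈ Finset.Icc 1 T, 0 ≤ δ t)
    (hconc : ∀ t ∈ Finset.Icc 1 T, ConcaveOn ℝ (Set.Icc 0 (δ t)) (g t))
    (hmono : ∀ t ∈ Finset.Icc 1 T, StrictMonoOn (g t) (Set.Icc 0 (δ t)))
    (hdiff : ∀ t ∈ Finset.Icc 1 T, DifferentiableOn ℝ (g t) (Set.Icc 0 (δ t)))
    (hg0 : ∀ t ∈ Finset.Icc 1 T, g t 0 = 0)
    (hOPT0 : OPT 0 = 0)
    (hOPT : ∀ t ∈ Finset.Icc 1 T,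
      IsGreatest {y : ℝ | ∃ v : ℕ → ℝ,
        (∀ τ ∈ Finset.Icc 1 t, v τ ∈ Set.Icc 0 (δ τ)) ∧
        (∑ τ ∈ Finset.Icc 1 t, v τ) ≤ C ∧
        y = ∑ τ ∈ Finset.Icc 1 t, g τ (v τ)} (OPT t))
    (hv1 : ∀ t ∈ Finset.Icc 1 T, v1 t ∈ Set.Icc 0 (δ t))
    (hvπ : ∀ t ∈ Finset.Icc 1 T, vπ t ∈ Set.Icc 0 (δ t))
    (hpursuit1 : ∀ t ∈ Finset.Icc 1 T, g t (v1 t) = OPT t - OPT (t - 1))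
    (hpursuitπ : ∀ t ∈ Finset.Icc 1 T, g t (vπ t) = (1 / π) * (OPT t - OPT (t - 1)))
    (hΦ1 : (∑ t ∈ Finset.Icc 1 T, v1 t) ≤ πt * C) :
    (∑ t ∈ Finset.Icc 1 T, vπ t) ≤ (1 / π) * (∑ t ∈ Finset.Icc 1 T, v1 t) ∧
    (∑ t ∈ Finset.Icc 1 T, vπ t) ≤ C ∧
    (∑ t ∈ Finset.Icc 1 T, g t (vπ t)) = (1 / π) * OPT T := by
  have hπ0 : (0:ℝ) < π := lt_of_lt_of_le one_pos (le_trans hπt hπ)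
  have hs1 : (1:ℝ)/π ≤ 1 := by
    rw [div_le_one hπ0]; exact le_trans hπt hπ
  have hs0 : (0:ℝ) ≤ 1/π := by positivity
  have key : ∀ t ∈ Finset.Icc 1 T, vπ t ≤ (1/π) * v1 t := by
    intro t ht
    have hv1t := hv1 t ht
    have hvπt := hvπ t ht
    have hmem : (1/π) * v1 t ∈ Set.Icc 0 (δ t) := by
      constructor
      · exact mul_nonneg hs0 hv1t.1
      · calc (1/π) * v1 t ≤ 1 * v1 t := mul_le_mul_of_nonneg_right hs1 hv1t.1
          _ = v1 t := one_mul _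
          _ ≤ δ t := hv1t.2
    have hge : (1/π) * g t (v1 t) ≤ g t ((1/π) * v1 t) := by
      have h0 : (0:ℝ) ∈ Set.Icc 0 (δ t) := Set.left_mem_Icc.mpr (hδ t ht)
      have := (hconc t ht).2 h0 hv1t (by linarith : (0:ℝ) ≤ 1 - 1/π) hs0 (by ring)
      simpa [hg0 t ht] using this
    by_contra hlt
    push_neg at hlt
    have := hmono t ht hmem hvπt hlt
    rw [hpursuitπ t ht, ← hpursuit1 t ht] at this
    linarith
  have h1 : (∑ t ∈ Finset.Icc 1 T, vπ t) ≤ (1/π) * (∑ t ∈ Finset.Icc 1 T, v1 t) := by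
    rw [Finset.mul_sum]
    exact Finset.sum_le_sum key
  refine ⟨h1, ?_, ?_⟩
  · calc (∑ t ∈ Finset.Icc 1 T, vπ t) ≤ (1/π) * (πt * C) :=
        le_trans h1 (mul_le_mul_of_nonneg_left hΦ1 hs0)
      _ ≤ 1 * C := by
        rw [← mul_assoc]
        apply mul_le_mul_of_nonneg_right _ hC.le
        rw [div_mul_eq_mul_div, one_mul, div_le_one hπ0]; exact hπ
      _ = C := one_mul _
  · calc (∑ t ∈ Finset.Icc 1 T, g t (vπ t))
        = ∑ t ∈ Finset.Icc 1 T, (1/π) * (OPT t - OPT (t-1)) :=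
          Finset.sum_congr rfl hpursuitπ
      _ = (1/π) * ∑ t ∈ Finset.Icc 1 T, (OPT t - OPT (t-1)) := (Finset.mul_sum _ _ _).symm
      _ = (1/π) * OPT T := by rw [telescope_icc T OPT, hOPT0, sub_zero]
end
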